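/- arXiv:2311.14103 — 2 statements merged into one kernel-verified Lean document; each statement's English description precedes it below -/
import Mathlib

section
/- For every rational number q ≤ −1 there exists exactly one finite sequence of integers (r_0, r_1, …, r_k) with r_0 ≤ −1 and r_i ≤ −2 for all 1 ≤ i ≤ k such that q = [r_0, …, r_k]. -/
/-- The negative continued fraction `[r₀, …, r_k] = r₀ - 1/(r₁ - 1/(⋯ - 1/r_k))`,
evaluated in `ℚ`. -/
def ncf : List ℤ → ℚ
  | [] => 0
  | [r] => (r : ℚ)
  | r :: s :: rs => (r : ℚ) - 1 / ncf (s :: rs)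

lemma ncf_cons_cons (r s : ℤ) (rs : List ℤ) :
    ncf (r :: s :: rs) = (r : ℚ) - 1 / ncf (s :: rs) := rfl

lemma ncf_bounds : ∀ (rs : List ℤ) (r : ℤ), (∀ a ∈ rs, a ≤ -2) →
    (r : ℚ) ≤ ncf (r :: rs) ∧ ncf (r :: rs) < r + 1 ∧ (rs ≠ [] → (r : ℚ) < ncf (r :: rs))
  | [], r, _ => by simp [ncf]
  | s :: rs, r, h => by
    have hs : s ≤ -2 := h s (by simp)
    have ih := ncf_bounds rs s (fun a ha => h a (by simp [ha]))
    set t := ncf (s :: rs) with ht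
    have hsq : (s : ℚ) ≤ -2 := by exact_mod_cast hs
    have htneg : t < -1 := lt_of_lt_of_le ih.2.1 (by linarith)
    have ht0 : t < 0 := by linarith
    have ht0' : t ≠ 0 := ne_of_lt ht0
    have hinv1 : 1 / t < 0 := by
      exact div_neg_of_pos_of_neg one_pos ht0
    have hinv2 : -1 < 1 / t := by
      have h1 : t * (1 / t) = 1 := by field_simp
      nlinarith
    rw [ncf_cons_cons]
    refine ⟨by linarith, by linarith, fun _ => by linarith⟩

lemma ncf_tail_lt_neg_one (s : ℤ) (rs : List ℤ) (hs : s ≤ -2) (h : ∀ a ∈ rs, a ≤ -2) :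
    ncf (s :: rs) < -1 :=
  lt_of_lt_of_le (ncf_bounds rs s h).2.1
    (by have : (s : ℚ) ≤ -2 := by exact_mod_cast hs
        linarith)

lemma ncf_exists : ∀ n : ℕ, ∀ q : ℚ, q.den = n → q ≤ -1 →
    ∃ rs : List ℤ, (∀ a ∈ rs, a ≤ -2) ∧ ncf (⌊q⌋ :: rs) = q := by
  intro n
  induction n using Nat.strong_induction_on with
  | _ n ih =>
    intro q hden hq
    by_cases hint : q.den = 1
    · -- q is an integer
      have hqz : ((q.num : ℚ)) = q := by
        rw [← Rat.num_div_den q, hint]; simp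
      refine ⟨[], by simp, ?_⟩
      have : ⌊q⌋ = q.num := by rw [← hqz]; exact Int.floor_intCast q.num
      rw [this]
      simpa [ncf] using hqz
    · -- q is not an integer
      have hfrac : (⌊q⌋ : ℚ) < q := by
        rcases lt_or_eq_of_le (Int.floor_le q) with h | h
        · exact h
        · exfalso; apply hint; rw [← h]; exact Rat.den_intCast ⌊q⌋
      have hfrac2 : q < ⌊q⌋ + 1 := Int.lt_floor_add_one q
      set t : ℚ := ((⌊q⌋ : ℚ) - q)⁻¹ with htdef
      have hd0 : (⌊q⌋ : ℚ) - q < 0 := by linarith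
      have hd1 : -1 < (⌊q⌋ : ℚ) - q := by linarith
      have hdne : (⌊q⌋ : ℚ) - q ≠ 0 := ne_of_lt hd0
      have hmul : ((⌊q⌋ : ℚ) - q) * t = 1 := by rw [htdef]; field_simp
      have ht0 : t < 0 := by
        rw [htdef]; exact inv_lt_zero.mpr hd0
      have htneg : t < -1 := by nlinarith
      -- denominator of t
      set m : ℤ := ⌊q⌋ * q.den - q.num with hm
      have hq_eq : ((q.num : ℚ)) / (q.den : ℚ) = q := Rat.num_div_den q
      have hdenpos : (0 : ℚ) < (q.den : ℚ) := by positivity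
      have hqd : q * (q.den : ℚ) = (q.num : ℚ) := Rat.mul_den_eq_num q
      have hrepr : (⌊q⌋ : ℚ) - q = Rat.divInt m (q.den : ℤ) := by
        rw [Rat.divInt_eq_div,
          eq_div_iff (by exact_mod_cast ne_of_gt hdenpos : ((q.den : ℤ) : ℚ) ≠ 0)]
        rw [hm]
        push_cast
        nlinarith [hqd]
      have ht_repr : t = Rat.divInt (q.den : ℤ) m := by
        rw [htdef, hrepr, Rat.inv_divInt]
      have hm0 : m < 0 := by
        have h5 : ((m : ℚ)) < 0 := by
          rw [hm]
          push_cast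
          nlinarith [mul_neg_of_neg_of_pos hd0 hdenpos, hqd]
        exact_mod_cast h5
      have hmgt : -(q.den : ℤ) < m := by
        have h5 : (-(q.den : ℤ) : ℚ) < (m : ℚ) := by
          rw [hm]
          push_cast
          nlinarith [mul_pos (by linarith : (0:ℚ) < (⌊q⌋ : ℚ) - q + 1) hdenpos, hqd]
        exact_mod_cast h5
      have hdvd : ((t.den : ℤ)) ∣ m := by rw [ht_repr]; exact Rat.den_dvd _ _
      have htden_lt : t.den < q.den := by
        have h1 : (t.den : ℤ) ≤ -m := Int.le_of_dvd (by omega) (dvd_neg.mpr hdvd)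
        omega
      obtain ⟨rs, hrs, hval⟩ := ih t.den (by omega) t rfl (le_of_lt htneg)
      have hfl : ⌊t⌋ ≤ -2 := by
        have h2 : (⌊t⌋ : ℚ) < -1 := lt_of_le_of_lt (Int.floor_le t) htneg
        have h3 : ⌊t⌋ < -1 := by exact_mod_cast h2
        omega
      refine ⟨⌊t⌋ :: rs, ?_, ?_⟩
      · intro a ha
        rcases List.mem_cons.mp ha with h | h
        · rw [h]; exact hfl
        · exact hrs a h
      · rw [ncf_cons_cons, hval, htdef]
        field_simp
        ring

lemma ncf_uniq : ∀ (L L' : List ℤ), (∀ a ∈ L.tail, a ≤ -2) → (∀ a ∈ L'.tail, a ≤ -2) →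
    ncf L = ncf L' → L ≠ [] → L' ≠ [] → L = L'
  | [], _, _, _, _, h, _ => absurd rfl h
  | _ :: _, [], _, _, _, _, h => absurd rfl h
  | [r], [r'], _, _, h, _, _ => by
    simp only [ncf] at h
    have : r = r' := by exact_mod_cast h
    rw [this]
  | [r], r' :: s' :: rs', _, h2, h, _, _ => by
    exfalso
    simp only [List.tail_cons] at h2
    have hb := ncf_bounds (s' :: rs') r' h2
    have h1 : (r' : ℚ) < ncf (r' :: s' :: rs') := hb.2.2 (by simp)
    have h2' : ncf (r' :: s' :: rs') < r' + 1 := hb.2.1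
    have h' : (r : ℚ) = ncf (r' :: s' :: rs') := h
    rw [← h'] at h1 h2'
    have : r' < r := by exact_mod_cast h1
    have : r < r' + 1 := by exact_mod_cast h2'
    omega
  | r :: s :: rs, [r'], h1, _, h, _, _ => by
    exfalso
    simp only [List.tail_cons] at h1
    have hb := ncf_bounds (s :: rs) r h1
    have ha : (r : ℚ) < ncf (r :: s :: rs) := hb.2.2 (by simp)
    have hb' : ncf (r :: s :: rs) < r + 1 := hb.2.1
    have h' : ncf (r :: s :: rs) = (r' : ℚ) := h
    rw [h'] at ha hb'
    have : r < r' := by exact_mod_cast ha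
    have : r' < r + 1 := by exact_mod_cast hb'
    omega
  | r :: s :: rs, r' :: s' :: rs', h1, h2, h, _, _ => by
    simp only [List.tail_cons] at h1 h2
    have hb := ncf_bounds (s :: rs) r h1
    have hb' := ncf_bounds (s' :: rs') r' h2
    have e1 : (r : ℚ) < ncf (r :: s :: rs) := hb.2.2 (by simp)
    have e2 : ncf (r :: s :: rs) < r + 1 := hb.2.1
    have e3 : (r' : ℚ) < ncf (r' :: s' :: rs') := hb'.2.2 (by simp)
    have e4 : ncf (r' :: s' :: rs') < r' + 1 := hb'.2.1
    have hrr' : r = r' := by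
      rw [h] at e1 e2
      have a1 : r < r' + 1 := by exact_mod_cast lt_trans e1 e4
      have a2 : r' < r + 1 := by exact_mod_cast lt_trans e3 e2
      omega
    have hsne : ncf (s :: rs) ≠ 0 :=
      ne_of_lt (lt_trans (ncf_tail_lt_neg_one s rs (h1 s (by simp)) (fun a ha => h1 a (by simp [ha]))) (by norm_num))
    have hs'ne : ncf (s' :: rs') ≠ 0 :=
      ne_of_lt (lt_trans (ncf_tail_lt_neg_one s' rs' (h2 s' (by simp)) (fun a ha => h2 a (by simp [ha]))) (by norm_num))
    have htails : ncf (s :: rs) = ncf (s' :: rs') := by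
      rw [ncf_cons_cons, ncf_cons_cons, hrr'] at h
      have : 1 / ncf (s :: rs) = 1 / ncf (s' :: rs') := by linarith
      field_simp at this
      exact this.symm
    have := ncf_uniq (s :: rs) (s' :: rs')
      (fun a ha => h1 a (List.mem_cons_of_mem _ (by simpa using ha)))
      (fun a ha => h2 a (List.mem_cons_of_mem _ (by simpa using ha)))
      htails (by simp) (by simp)
    rw [hrr', this]

/-- Every rational `q ≤ -1` has a unique negative continued fraction expansion
`q = [r₀, …, r_k]` with `r₀ ≤ -1` and `r_i ≤ -2` for all `1 ≤ i ≤ k`. -/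
theorem stmt1 (q : ℚ) (hq : q ≤ -1) :
    ∃! L : List ℤ, L ≠ [] ∧ (∀ a, L.head? = some a → a ≤ -1) ∧
      (∀ a ∈ L.tail, a ≤ -2) ∧ ncf L = q := by
  obtain ⟨rs, hrs, hval⟩ := ncf_exists q.den q rfl hq
  refine ⟨⌊q⌋ :: rs, ⟨by simp, ?_, by simpa using hrs, hval⟩, ?_⟩
  · intro a ha
    simp only [List.head?_cons, Option.some.injEq] at ha
    subst ha
    calc ⌊q⌋ ≤ ⌊(-1 : ℚ)⌋ := Int.floor_le_floor hq
    _ = -1 := by norm_num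
  · rintro L' ⟨hne, _, htail, hval'⟩
    exact ncf_uniq L' (⌊q⌋ :: rs) htail (by simpa using hrs) (by rw [hval, hval']) hne (by simp)
end

section
/- Let r and s be rational numbers that are Farey neighbors with s > r. If either 2 ≤ r < 4 or r ≥ 5, then s > 2 and s does not lie in the interval (4, 5]; in particular, s ≠ (4k+1)/k for every positive integer k. -/
/-!
Farey neighbours `p/q < a/b` satisfy `aq - pb = 1`, so any `c/d` strictly between them has
`d = q (ad - cb) + b (cq - pd) ≥ q + b ≥ 2`. Hence no integer lies strictly between them:
since `r ≥ 2` we get `s > 2`, and `s ∈ (4, 5]` would put `4` strictly between `r < 4` and `s`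
(while `r ≥ 5` forces `s > 5`).
-/

def FareyNeighbors (r s : ℚ) : Prop :=
  |r.num * (s.den : ℤ) - s.num * (r.den : ℤ)| = 1

namespace FareyNeighbors

variable {r s : ℚ}

theorem num_mul_den_eq (h : FareyNeighbors r s) (hrs : r < s) :
    s.num * r.den = r.num * s.den + 1 := by
  have hlt := (Rat.lt_iff r s).1 hrs
  rcases (abs_eq zero_le_one).1 h with h' | h' <;> omega

theorem den_add_den_le {x : ℚ} (h : FareyNeighbors r s) (hrx : r < x) (hxs : x < s) :
    r.den + s.den ≤ x.den := by
  have hdet := h.num_mul_den_eq (hrx.trans hxs)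
  have hleft : 1 ≤ x.num * r.den - r.num * x.den := by linarith [(Rat.lt_iff r x).1 hrx]
  have hright : 1 ≤ s.num * x.den - x.num * s.den := by linarith [(Rat.lt_iff x s).1 hxs]
  have hden : (x.den : ℤ) =
      r.den * (s.num * x.den - x.num * s.den) + s.den * (x.num * r.den - r.num * x.den) := by
    linear_combination -(x.den : ℤ) * hdet
  zify
  linarith [mul_le_mul_of_nonneg_left hright (Int.natCast_nonneg r.den),
    mul_le_mul_of_nonneg_left hleft (Int.natCast_nonneg s.den)]

theorem intCast_notMem_Ioo (h : FareyNeighbors r s) (n : ℤ) : (n : ℚ) ∉ Set.Ioo r s := by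
  rintro ⟨hrn, hns⟩
  have hden := h.den_add_den_le hrn hns
  rw [Rat.den_intCast] at hden
  linarith [r.den_pos, s.den_pos]

end FareyNeighbors

theorem four_mul_add_one_div_mem_Ioc {k : ℕ} (hk : 0 < k) :
    ((4 * k + 1) / k : ℚ) ∈ Set.Ioc 4 5 := by
  have hk' : (1 : ℚ) ≤ k := by exact_mod_cast hk
  constructor
  · rw [lt_div_iff₀ (by linarith)]; linarith
  · rw [div_le_iff₀ (by linarith)]; linarith

/-- Let `r` and `s` be rational Farey neighbors (their lowest-terms numerators and
denominators satisfy `|r.num·s.den - s.num·r.den| = 1`) with `s > r`. If either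
`2 ≤ r < 4` or `r ≥ 5`, then `s > 2` and `s ∉ (4, 5]`; in particular
`s ≠ (4k+1)/k` for every positive integer `k`. -/
theorem stmt11 (r s : ℚ)
    (hfarey : |r.num * (s.den : ℤ) - s.num * (r.den : ℤ)| = 1)
    (hrs : r < s)
    (hr : (2 ≤ r ∧ r < 4) ∨ 5 ≤ r) :
    2 < s ∧ ¬(4 < s ∧ s ≤ 5) ∧ ∀ k : ℕ, 0 < k → s ≠ (4 * k + 1) / k := by
  have hnbr : FareyNeighbors r s := hfarey
  have hs : ¬(4 < s ∧ s ≤ 5) := by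
    rintro ⟨h4, h5⟩
    rcases hr with ⟨-, hr4⟩ | hr5
    · exact hnbr.intCast_notMem_Ioo 4 ⟨mod_cast hr4, mod_cast h4⟩
    · linarith
  refine ⟨?_, hs, ?_⟩
  · rcases hr with ⟨hr2, -⟩ | hr5 <;> linarith
  · rintro k hk rfl
    exact hs (four_mul_add_one_div_mem_Ioc hk)
end
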